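/- For every fixed ν ∈ ℝ, the modified Bessel function of the second kind satisfies the asymptotic equivalence K_ν(z) ∼ √(π/(2z)) e^{−z} as z → +∞; that is, lim_{z→∞} √(2z/π) · e^{z} · ∫₀^∞ e^{−z cosh t} cosh(νt) dt = 1. -/

import Mathlib

open MeasureTheory Real Filter

/-- Modified Bessel function of the second kind, integral representation. -/
noncomputable def besselK (ν z : ℝ) : ℝ :=
  ∫ t in Set.Ioi (0:ℝ), Real.exp (-z * Real.cosh t) * Real.cosh (ν * t)

/-! Laplace's method. The substitution `t = s / √z` gives
`√z e^z K_ν(z) = ∫₀^∞ exp (z (1 - cosh (s / √z))) cosh (ν s / √z) ds`.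
Since `cosh x ≥ 1 + x² / 2`, for `z ≥ 1` the integrand is dominated by `e^{-s²/2} cosh (ν s)`, and
since `(cosh x - 1) / x² → 1 / 2` it converges pointwise to `e^{-s²/2}`, whose integral over
`(0, ∞)` is `√(π / 2)`. -/

open Topology Set

namespace Real

lemma cosh_sub_one_eq_two_mul_sinh_half_sq (x : ℝ) : cosh x - 1 = 2 * sinh (x / 2) ^ 2 := by
  have h := cosh_two_mul (x / 2)
  rw [mul_div_cancel₀ x two_ne_zero, cosh_sq] at h
  linarith

lemma one_add_sq_div_two_le_cosh (x : ℝ) : 1 + x ^ 2 / 2 ≤ cosh x := by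
  rw [← cosh_abs, ← sq_abs]
  have h : |x| / 2 ≤ sinh (|x| / 2) := self_le_sinh_iff.mpr (by positivity)
  nlinarith [cosh_sub_one_eq_two_mul_sinh_half_sq |x|, abs_nonneg x]

lemma tendsto_sinh_div_self : Tendsto (fun x => sinh x / x) (𝓝[≠] 0) (𝓝 1) := by
  simpa [div_eq_inv_mul] using (hasDerivAt_sinh 0).tendsto_slope_zero

lemma tendsto_cosh_sub_one_div_sq :
    Tendsto (fun x => (cosh x - 1) / x ^ 2) (𝓝[≠] 0) (𝓝 (1 / 2)) := by
  have half : Tendsto (fun x : ℝ => x / 2) (𝓝[≠] 0) (𝓝[≠] 0) :=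
    tendsto_nhdsWithin_of_tendsto_nhds_of_eventually_within _
      (by simpa using ((continuous_id.div_const (2 : ℝ)).tendsto 0).mono_left nhdsWithin_le_nhds)
      (eventually_nhdsWithin_of_forall fun x hx => by simpa using hx)
  have h := ((tendsto_sinh_div_self.comp half).pow 2).div_const 2
  rw [one_pow] at h
  refine h.congr fun x => ?_
  simp only [Function.comp_apply, cosh_sub_one_eq_two_mul_sinh_half_sq, div_pow]
  ring

end Real

lemma integrable_exp_neg_sq_div_two_add_mul (a : ℝ) :
    Integrable fun s : ℝ => exp (-s ^ 2 / 2 + a * s) := by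
  have h : (fun s : ℝ => exp (-s ^ 2 / 2 + a * s)) =
      fun s => exp (a ^ 2 / 2) * exp (-(1 / 2) * (s - a) ^ 2) := by
    ext s
    rw [← exp_add]
    ring_nf
  rw [h]
  exact ((integrable_exp_neg_mul_sq one_half_pos).comp_sub_right a).const_mul _

lemma integrable_exp_neg_sq_div_two_mul_cosh (ν : ℝ) :
    Integrable fun s : ℝ => exp (-s ^ 2 / 2) * cosh (ν * s) := by
  have h : (fun s : ℝ => exp (-s ^ 2 / 2) * cosh (ν * s)) =
      fun s => (exp (-s ^ 2 / 2 + ν * s) + exp (-s ^ 2 / 2 + -ν * s)) / 2 := by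
    ext s
    rw [cosh_eq, exp_add, exp_add]
    ring_nf
  rw [h]
  exact ((integrable_exp_neg_sq_div_two_add_mul ν).add
    (integrable_exp_neg_sq_div_two_add_mul (-ν))).div_const 2

lemma sqrt_mul_exp_mul_besselK (ν : ℝ) {z : ℝ} (hz : 0 < z) :
    √z * exp z * besselK ν z =
      ∫ s in Ioi 0, exp (z * (1 - cosh (s / √z))) * cosh (ν * (s / √z)) := by
  have hcov := integral_comp_mul_right_Ioi'
    (fun t => exp (-z * cosh t) * cosh (ν * t)) 0 (inv_pos.mpr (sqrt_pos.mpr hz))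
  rw [zero_mul, smul_eq_mul] at hcov
  rw [besselK, ← hcov, mul_comm √z, mul_assoc, mul_inv_cancel_left₀ (sqrt_pos.mpr hz).ne',
    ← integral_const_mul]
  refine setIntegral_congr_fun measurableSet_Ioi fun s _ => ?_
  rw [← div_eq_mul_inv, mul_one_sub, sub_eq_add_neg, exp_add, neg_mul_eq_neg_mul, mul_assoc]

lemma mul_one_sub_cosh_div_sqrt_le {z : ℝ} (hz : 0 < z) (s : ℝ) :
    z * (1 - cosh (s / √z)) ≤ -s ^ 2 / 2 := by
  have hsq : z * (s / √z) ^ 2 = s ^ 2 := by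
    rw [div_pow, sq_sqrt hz.le]
    field_simp
  nlinarith [one_add_sq_div_two_le_cosh (s / √z)]

lemma tendsto_mul_one_sub_cosh_div_sqrt (s : ℝ) :
    Tendsto (fun z => z * (1 - cosh (s / √z))) atTop (𝓝 (-s ^ 2 / 2)) := by
  rcases eq_or_ne s 0 with rfl | hs
  · simp
  have hu : Tendsto (fun z => s / √z) atTop (𝓝[≠] 0) :=
    tendsto_nhdsWithin_of_tendsto_nhds_of_eventually_within _
      (tendsto_const_nhds.div_atTop tendsto_sqrt_atTop)
      ((eventually_gt_atTop 0).mono fun z hz => div_ne_zero hs (sqrt_pos.mpr hz).ne')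
  have h := (tendsto_cosh_sub_one_div_sq.comp hu).const_mul (-s ^ 2)
  rw [show -s ^ 2 * (1 / 2) = -s ^ 2 / 2 by ring] at h
  refine h.congr' ((eventually_gt_atTop 0).mono fun z hz => ?_)
  have hsq : (s / √z) ^ 2 = s ^ 2 / z := by rw [div_pow, sq_sqrt hz.le]
  simp only [Function.comp_apply, hsq]
  field_simp
  ring

lemma tendsto_integral_exp_mul_one_sub_cosh_div_sqrt (ν : ℝ) :
    Tendsto (fun z => ∫ s in Ioi 0, exp (z * (1 - cosh (s / √z))) * cosh (ν * (s / √z)))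
      atTop (𝓝 (∫ s in Ioi 0, exp (-s ^ 2 / 2))) := by
  refine tendsto_integral_filter_of_dominated_convergence
    (fun s => exp (-s ^ 2 / 2) * cosh (ν * s)) (Eventually.of_forall fun z => ?_) ?_
    (integrable_exp_neg_sq_div_two_mul_cosh ν).integrableOn (ae_of_all _ fun s => ?_)
  · exact Continuous.aestronglyMeasurable (by fun_prop)
  · filter_upwards [eventually_ge_atTop 1] with z hz
    refine ae_of_all _ fun s => ?_
    have hz0 : 0 < z := by linarith
    rw [norm_of_nonneg (by positivity)]
    gcongr
    · exact mul_one_sub_cosh_div_sqrt_le hz0 s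
    · rw [cosh_le_cosh, mul_div_assoc', abs_div, abs_of_pos (sqrt_pos.mpr hz0)]
      exact div_le_self (abs_nonneg _) (one_le_sqrt.mpr hz)
  · have hcosh : Tendsto (fun z => cosh (ν * (s / √z))) atTop (𝓝 1) := by
      simpa [Function.comp_def] using (continuous_cosh.tendsto 0).comp
        (by simpa using (tendsto_const_nhds.div_atTop tendsto_sqrt_atTop).const_mul ν)
    simpa using
      ((continuous_exp.tendsto _).comp (tendsto_mul_one_sub_cosh_div_sqrt s)).mul hcosh

theorem besselK_asymptotic (ν : ℝ) :
    Tendsto (fun z : ℝ => Real.sqrt (2 * z / π) * Real.exp z * besselK ν z)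
      atTop (nhds 1) := by
  have hgauss : ∫ s in Ioi (0 : ℝ), exp (-s ^ 2 / 2) = √(2 * π) / 2 := by
    convert integral_gaussian_Ioi (1 / 2) using 4
    · ring
    · field_simp
  have hconst : √(2 / π) * (√(2 * π) / 2) = 1 := by
    rw [← mul_div_assoc, ← sqrt_mul (by positivity), show 2 / π * (2 * π) = 2 ^ 2 by field_simp,
      sqrt_sq zero_le_two, div_self two_ne_zero]
  have h := (tendsto_integral_exp_mul_one_sub_cosh_div_sqrt ν).const_mul √(2 / π)
  rw [hgauss, hconst] at h
  refine h.congr' ((eventually_gt_atTop 0).mono fun z hz => ?_)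
  beta_reduce
  rw [← sqrt_mul_exp_mul_besselK ν hz, mul_div_right_comm 2 z π, sqrt_mul (by positivity)]
  ring
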